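/- arXiv:1804.05530 — 3 statements merged into one kernel-verified Lean document; each statement's English description precedes it below -/
import Mathlib

section
/- Let p and q be distinct primes and let V be a nontrivial simple module over the group algebra 𝔽_p[ℤ/q] (equivalently, a nonzero 𝔽_p-vector space with an action of the cyclic group ℤ/q having no nonzero fixed vectors and no proper nonzero invariant subspaces). Then φ(V ⋊ ℤ/q) = 0, where the semidirect product is formed with respect to this action. -/
/-- `φ(G)`: the number of elements of `G` whose order equals the exponent of `G`. -/
noncomputable def phi (G : Type*) [Group G] : ℕ :=
  Nat.card {g : G // orderOf g = Monoid.exponent G}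

/-- Package an action by additive automorphisms as an action by multiplicative
automorphisms of `Multiplicative V`, as needed to form a semidirect product. -/
def MonoidHom.toMulAutMultiplicative {H : Type*} [Monoid H] {V : Type*} [AddGroup V]
    (ρ : H →* Multiplicative (AddAut V)) : H →* MulAut (Multiplicative V) where
  toFun g := AddEquiv.toMultiplicative (Multiplicative.toAdd (ρ g))
  map_one' := by ext v; simp
  map_mul' g h := by ext v; simp

/-!
For `x = (v, g)` with `g ≠ 1`, the power `x ^ q = (w, 1)` commutes with `x`, which forces
`g • w = w`. The fixed space of `g` is invariant (the acting group is abelian) and is not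
everything (`g` generates `ℤ/q` and the action is nontrivial), so by simplicity it is zero and
`x ^ q = 1`. Elements with `g = 1` lie in `V` and satisfy `x ^ p = 1`. Thus every order divides
`p` or `q`, while both `p` and `q` occur as orders, so the exponent is divisible by `p * q` and no
element attains it.
-/

theorem phi_eq_zero_of_forall_orderOf_dvd {G : Type*} [Group G] {p q : ℕ} (hp : p.Prime)
    (hq : q.Prime) (hpq : p ≠ q) {a b : G} (ha : orderOf a = p) (hb : orderOf b = q)
    (h : ∀ x : G, orderOf x ∣ p ∨ orderOf x ∣ q) : phi G = 0 := by
  rw [phi, Nat.card_eq_zero]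
  refine .inl ⟨fun ⟨x, hx⟩ => ?_⟩
  have hpx : p ∣ orderOf x := hx ▸ ha ▸ Monoid.order_dvd_exponent a
  have hqx : q ∣ orderOf x := hx ▸ hb ▸ Monoid.order_dvd_exponent b
  rcases h x with hxp | hxq
  · exact hpq ((Nat.prime_dvd_prime_iff_eq hq hp).1 (hqx.trans hxp)).symm
  · exact hpq ((Nat.prime_dvd_prime_iff_eq hp hq).1 (hpx.trans hxq))

theorem MonoidHom.eq_one_of_map_eq_one_of_prime_card {H M : Type*} [Group H] [Monoid M]
    {q : ℕ} [Fact q.Prime] (hH : Nat.card H = q) (f : H →* M) {g : H} (hg : g ≠ 1)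
    (hfg : f g = 1) : f = 1 :=
  eq_of_eqOn_dense (Subgroup.zpowers_eq_closure g ▸ zpowers_eq_top_of_prime_card hH hg)
    (Set.eqOn_singleton.2 hfg)

namespace SemidirectProduct

variable {N G : Type*} [CommGroup N] [Group G] {φ : G →* MulAut N}

theorem map_right_left_eq_of_commute {x y : N ⋊[φ] G} (hy : y.right = 1) (h : Commute x y) :
    φ x.right y.left = y.left := by
  have := congrArg left h.eq
  simp only [mul_left, hy, map_one, MulAut.one_apply] at this
  exact mul_left_cancel (this.trans (mul_comm _ _))

end SemidirectProduct

theorem Multiplicative.pow_char_eq_one {n : ℕ} {M : Type*} [AddCommGroup M] [Module (ZMod n) M]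
    (a : Multiplicative M) : a ^ n = 1 :=
  toAdd.injective <| (toAdd_pow a n).trans (ZModModule.char_nsmul_eq_zero n _)

def AddAut.fixedZModSubmodule (p : ℕ) {V : Type*} [AddCommGroup V] [Module (ZMod p) V]
    (f : AddAut V) : Submodule (ZMod p) V :=
  AddSubgroup.toZModSubmodule p (f.toAddMonoidHom.eqLocus (AddMonoidHom.id V))

@[simp]
theorem AddAut.mem_fixedZModSubmodule {p : ℕ} {V : Type*} [AddCommGroup V] [Module (ZMod p) V]
    {f : AddAut V} {v : V} : v ∈ f.fixedZModSubmodule p ↔ f v = v :=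
  Iff.rfl

section

variable {p q : ℕ} {V : Type*} [AddCommGroup V] [Module (ZMod p) V]

theorem fixedZModSubmodule_eq_bot {H : Type*} [CommGroup H] [Fact q.Prime]
    (hH : Nat.card H = q) {ρ : H →* Multiplicative (AddAut V)}
    (hnontrivial : ∃ (g : H) (v : V), Multiplicative.toAdd (ρ g) v ≠ v)
    (hsimple : ∀ W : Submodule (ZMod p) V,
      (∀ (g : H), ∀ v ∈ W, Multiplicative.toAdd (ρ g) v ∈ W) → W = ⊥ ∨ W = ⊤)
    {g : H} (hg : g ≠ 1) : (ρ g).toAdd.fixedZModSubmodule p = ⊥ := by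
  refine (hsimple _ fun h v hv => ?_).resolve_right fun htop => ?_
  · rw [AddAut.mem_fixedZModSubmodule] at hv ⊢
    calc (ρ g).toAdd ((ρ h).toAdd v) = (ρ (g * h)).toAdd v := by rw [map_mul]; rfl
      _ = (ρ (h * g)).toAdd v := by rw [mul_comm]
      _ = (ρ h).toAdd ((ρ g).toAdd v) := by rw [map_mul]; rfl
      _ = (ρ h).toAdd v := by rw [hv]
  · have hρg : ρ g = 1 := Multiplicative.toAdd.injective <| AddEquiv.ext fun v =>
      AddAut.mem_fixedZModSubmodule.1 (htop ▸ Submodule.mem_top)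
    obtain ⟨g', v, hv⟩ := hnontrivial
    rw [MonoidHom.eq_one_of_map_eq_one_of_prime_card hH ρ hg hρg] at hv
    exact hv rfl

variable {G : Type*} [Group G]

theorem orderOf_inl_ofAdd [Fact p.Prime] {φ : G →* MulAut (Multiplicative V)} {v : V}
    (hv : v ≠ 0) : orderOf (SemidirectProduct.inl (φ := φ) (Multiplicative.ofAdd v)) = p := by
  rw [orderOf_injective _ SemidirectProduct.inl_injective, orderOf_ofAdd_eq_addOrderOf]
  exact addOrderOf_eq_prime (ZModModule.char_nsmul_eq_zero p v) hv

theorem pow_char_eq_one_of_right_eq_one {φ : G →* MulAut (Multiplicative V)}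
    {x : Multiplicative V ⋊[φ] G} (hx : x.right = 1) : x ^ p = 1 := by
  rw [← SemidirectProduct.inl_left_mul_inr_right x, hx, map_one, mul_one, ← map_pow,
    Multiplicative.pow_char_eq_one, map_one]

theorem pow_eq_one_of_right_ne_one {H : Type*} [CommGroup H] [Fact q.Prime]
    (hH : Nat.card H = q) {ρ : H →* Multiplicative (AddAut V)}
    (hnontrivial : ∃ (g : H) (v : V), Multiplicative.toAdd (ρ g) v ≠ v)
    (hsimple : ∀ W : Submodule (ZMod p) V,
      (∀ (g : H), ∀ v ∈ W, Multiplicative.toAdd (ρ g) v ∈ W) → W = ⊥ ∨ W = ⊤)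
    {x : Multiplicative V ⋊[ρ.toMulAutMultiplicative] H} (hx : x.right ≠ 1) : x ^ q = 1 := by
  have hright : (x ^ q).right = 1 := by
    rw [← SemidirectProduct.rightHom_eq_right, map_pow, ← hH, pow_card_eq_one']
  have hfix := SemidirectProduct.map_right_left_eq_of_commute hright (Commute.self_pow x q)
  have hleft : (x ^ q).left = 1 := by
    have hmem : (x ^ q).left.toAdd ∈ (ρ x.right).toAdd.fixedZModSubmodule p :=
      congrArg Multiplicative.toAdd hfix
    rw [fixedZModSubmodule_eq_bot hH hnontrivial hsimple hx, Submodule.mem_bot] at hmem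
    exact Multiplicative.toAdd.injective hmem
  exact SemidirectProduct.ext hleft hright

end

theorem phi_semidirectProduct_eq_zero_general
    (p q : ℕ) (hp : p.Prime) (hq : q.Prime) (hpq : p ≠ q)
    (V : Type*) [AddCommGroup V] [Module (ZMod p) V] [Nontrivial V]
    (ρ : Multiplicative (ZMod q) →* Multiplicative (AddAut V))
    (hnontrivial : ∃ (g : Multiplicative (ZMod q)) (v : V), Multiplicative.toAdd (ρ g) v ≠ v)
    (hsimple : ∀ W : Submodule (ZMod p) V,
      (∀ (g : Multiplicative (ZMod q)), ∀ v ∈ W, Multiplicative.toAdd (ρ g) v ∈ W) → W = ⊥ ∨ W = ⊤) :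
    phi (Multiplicative V ⋊[ρ.toMulAutMultiplicative] Multiplicative (ZMod q)) = 0 := by
  have := Fact.mk hp
  have := Fact.mk hq
  obtain ⟨v, hv⟩ := exists_ne (0 : V)
  have hcard : Nat.card (Multiplicative (ZMod q)) = q :=
    (Nat.card_congr Multiplicative.toAdd).trans (Nat.card_zmod q)
  have horder_q : orderOf (SemidirectProduct.inr (φ := ρ.toMulAutMultiplicative)
      (Multiplicative.ofAdd (1 : ZMod q))) = q := by
    rw [orderOf_injective _ SemidirectProduct.inr_injective, orderOf_ofAdd_eq_addOrderOf,
      ZMod.addOrderOf_one]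
  refine phi_eq_zero_of_forall_orderOf_dvd hp hq hpq (orderOf_inl_ofAdd hv) horder_q fun x => ?_
  by_cases hx : x.right = 1
  · exact .inl (orderOf_dvd_of_pow_eq_one (pow_char_eq_one_of_right_eq_one hx))
  · exact .inr (orderOf_dvd_of_pow_eq_one
      (pow_eq_one_of_right_ne_one hcard hnontrivial hsimple hx))

/-- **Lemma.** Let `p ≠ q` be primes and let `V` be a nontrivial simple
`𝔽_p[ℤ/q]`-module, i.e. a nonzero `𝔽_p`-vector space with an action `ρ` of `ℤ/q`
which is nontrivial and admits no proper nonzero invariant subspace. Then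
`φ(V ⋊ ℤ/q) = 0`. -/
theorem phi_semidirectProduct_eq_zero
    (p q : ℕ) (hp : p.Prime) (hq : q.Prime) (hpq : p ≠ q)
    (V : Type*) [AddCommGroup V] [Module (ZMod p) V] [Finite V] [Nontrivial V]
    (ρ : Multiplicative (ZMod q) →* Multiplicative (AddAut V))
    (hnontrivial : ∃ (g : Multiplicative (ZMod q)) (v : V), Multiplicative.toAdd (ρ g) v ≠ v)
    (hsimple : ∀ W : Submodule (ZMod p) V,
      (∀ (g : Multiplicative (ZMod q)), ∀ v ∈ W, Multiplicative.toAdd (ρ g) v ∈ W) → W = ⊥ ∨ W = ⊤) :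
    phi (Multiplicative V ⋊[ρ.toMulAutMultiplicative] Multiplicative (ZMod q)) = 0 :=
  phi_semidirectProduct_eq_zero_general p q hp hq hpq V ρ hnontrivial hsimple
end

section
/- There exists a finite group G and a prime p such that O_{p'}(G) = 1, φ(G) ≠ 0, and G is not p-nilpotent. -/
/-- `G` is `p`-nilpotent: it has a normal `p`-complement, i.e. a normal subgroup of
order coprime to `p` whose index is a power of `p`. -/
def IsPNilpotent (p : ℕ) (G : Type*) [Group G] : Prop :=
  ∃ N : Subgroup G, N.Normal ∧ (Nat.card N).Coprime p ∧ ∃ n : ℕ, N.index = p ^ n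

/-- `G` is `p'`-reduced: `O_{p'}(G) = 1`, i.e. every normal subgroup of order coprime
to `p` is trivial. -/
def PPrimeReduced (p : ℕ) (G : Type*) [Group G] : Prop :=
  ∀ N : Subgroup G, N.Normal → (Nat.card N).Coprime p → N = ⊥


abbrev GG : Type := DihedralGroup 3 × Multiplicative (ZMod 3)

lemma GG_pow6 : ∀ g : GG, g ^ 6 = 1 := by decide

lemma GG_no_central_two : ∀ x : GG, (∀ y, y * x = x * y) → x ^ 2 = 1 → x = 1 := by decide

lemma GG_card : Nat.card GG = 18 := by rw [Nat.card_eq_fintype_card]; decide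

/-- No normal subgroup of order 2. -/
lemma GG_no_normal_two (N : Subgroup GG) (hN : N.Normal) (h2 : Nat.card N = 2) : False := by
  have hne : N ≠ ⊥ := by
    intro h; rw [h, Subgroup.card_bot] at h2; omega
  obtain ⟨⟨x, hxN⟩, hx1⟩ := (Subgroup.ne_bot_iff_exists_ne_one).mp hne
  have hx1' : x ≠ 1 := by simpa [Subgroup.mk_eq_one] using hx1
  have hx2 : x ^ 2 = 1 := by
    have := pow_card_eq_one' (G := N) (x := ⟨x, hxN⟩)
    rw [h2] at this
    simpa [SubmonoidClass.mk_pow, Subgroup.mk_eq_one] using congrArg Subtype.val this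
  -- x is central
  have hcent : ∀ y : GG, y * x = x * y := by
    intro y
    by_contra hxy
    have hc : y * x * y⁻¹ ∈ N := hN.conj_mem x hxN y
    set c := y * x * y⁻¹ with hcdef
    have hc1 : c ≠ 1 := by
      intro h
      apply hx1'
      have := congrArg (fun z => y⁻¹ * z * y) h
      simpa [hcdef, mul_assoc] using this
    have hcx : c ≠ x := by
      intro h
      apply hxy
      have := congrArg (fun z => z * y) h
      simpa [hcdef, mul_assoc] using this
    have hsub : ({1, x, c} : Set GG) ⊆ (N : Set GG) := by
      intro z hz
      rcases hz with h | h | h <;> subst h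
      · exact N.one_mem
      · exact hxN
      · exact hc
    have h3 : ({1, x, c} : Set GG).ncard = 3 := by
      rw [Set.ncard_insert_of_notMem (by simp [hx1'.symm, hc1.symm]),
        Set.ncard_insert_of_notMem (by simp [hcx.symm]), Set.ncard_singleton]
    have hle := Set.ncard_le_ncard hsub (Set.toFinite _)
    rw [h3] at hle
    have hNc : (N : Set GG).ncard = 2 := by
      rw [← Nat.card_coe_set_eq]; exact h2
    omega
  exact hx1' (GG_no_central_two x hcent hx2)

lemma GG_coprime_card (N : Subgroup GG) (h : (Nat.card N).Coprime 3) :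
    Nat.card N ∣ 2 := by
  have hdvd : Nat.card N ∣ 18 := GG_card ▸ Subgroup.card_subgroup_dvd_card N
  have h9 : (Nat.card N).Coprime 9 := by
    have : (9 : ℕ) = 3 ^ 2 := by norm_num
    rw [this]; exact h.pow_right 2
  exact (Nat.Coprime.dvd_of_dvd_mul_right h9 (by simpa [show (18:ℕ) = 2 * 9 by norm_num] using hdvd))

noncomputable def gg0 : GG := (DihedralGroup.sr 0, Multiplicative.ofAdd 1)

lemma GG_order_gg0 : orderOf gg0 = 6 := (orderOf_eq_iff (by norm_num)).mpr (by decide)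

lemma GG_exponent : Monoid.exponent GG = 6 := by
  apply Nat.dvd_antisymm
  · exact Monoid.exponent_dvd_of_forall_pow_eq_one GG_pow6
  · exact GG_order_gg0 ▸ Monoid.order_dvd_exponent gg0

/-- **Example.** There exist a finite group `G` and a prime `p` such that
`O_{p'}(G) = 1`, `φ(G) ≠ 0`, and `G` is not `p`-nilpotent. -/
theorem exists_pPrimeReduced_phi_ne_zero_not_pNilpotent :
    ∃ (G : Type) (instG : Group G) (_ : Finite G) (p : ℕ), p.Prime ∧
      haveI := instG
      PPrimeReduced p G ∧ phi G ≠ 0 ∧ ¬ IsPNilpotent p G := by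
  refine ⟨GG, inferInstance, inferInstance, 3, by norm_num, ?_, ?_, ?_⟩
  · -- PPrimeReduced
    intro N hN hcop
    rcases (Nat.dvd_prime Nat.prime_two).mp (GG_coprime_card N hcop) with h | h
    · exact Subgroup.card_eq_one.mp h
    · exact absurd h (fun h => GG_no_normal_two N hN h)
  · -- phi ≠ 0
    have hne : Nonempty {g : GG // orderOf g = Monoid.exponent GG} :=
      ⟨⟨gg0, by rw [GG_exponent]; exact GG_order_gg0⟩⟩
    simp only [phi]
    exact Nat.card_pos.ne'
  · -- not 3-nilpotent
    rintro ⟨N, hN, hcop, n, hidx⟩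
    have hmul : Nat.card N * N.index = 18 := by
      rw [Subgroup.card_mul_index, GG_card]
    rcases (Nat.dvd_prime Nat.prime_two).mp (GG_coprime_card N hcop) with h | h
    · rw [h, one_mul, hidx] at hmul
      have h2 : (2 : ℕ) ∣ 3 ^ n := ⟨9, by omega⟩
      have := Nat.Prime.dvd_of_dvd_pow Nat.prime_two h2
      omega
    · exact GG_no_normal_two N hN h
end

section
/- Let K be a nontrivial finite group and let s be the number of distinct prime divisors of exp(K). Then the direct product G = K × K × ⋯ × K of s copies of K satisfies exp(G) = exp(K) and φ(G) ≠ 0. -/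
/-- **Lemma.** Let `K` be a nontrivial finite group and let `s` be the number of
distinct prime divisors of `exp(K)`. Then the direct product `G = K × ⋯ × K` of `s`
copies of `K` satisfies `exp(G) = exp(K)` and `φ(G) ≠ 0`. -/
theorem exponent_pi_eq_and_phi_pi_ne_zero
    (K : Type*) [Group K] [Finite K] [Nontrivial K] :
    Monoid.exponent (Fin (Monoid.exponent K).primeFactors.card → K) = Monoid.exponent K ∧
      phi (Fin (Monoid.exponent K).primeFactors.card → K) ≠ 0 := by
  have hK1 : 1 < Monoid.exponent K := Monoid.one_lt_exponent
  have hK0 : Monoid.exponent K ≠ 0 := by omega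
  have hfac : (Monoid.exponent K).primeFactors.Nonempty :=
    Nat.nonempty_primeFactors.mpr hK1
  set s := (Monoid.exponent K).primeFactors.card with hs
  have hs0 : 0 < s := Finset.card_pos.mpr hfac
  haveI : Nonempty (Fin s) := ⟨⟨0, hs0⟩⟩
  -- exponent of the product
  have hexp : Monoid.exponent (Fin s → K) = Monoid.exponent K := by
    rw [Monoid.exponent_pi]
    refine Nat.dvd_antisymm (Finset.lcm_dvd fun i _ => dvd_rfl) ?_
    exact Finset.dvd_lcm (Finset.mem_univ (Classical.arbitrary (Fin s)))
  refine ⟨hexp, ?_⟩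
  -- construct an element of maximal order
  let e : Fin s ≃ (Monoid.exponent K).primeFactors :=
    ((Monoid.exponent K).primeFactors.equivFin).symm
  have hprime : ∀ i : Fin s, Nat.Prime ((e i : ℕ)) := fun i =>
    Nat.prime_of_mem_primeFactors (e i).2
  choose g hg using fun i : Fin s =>
    (hprime i).exists_orderOf_eq_pow_factorization_exponent (G := K)
  have hcomp : ∀ i : Fin s, orderOf (g i) ∣ orderOf (g : Fin s → K) := by
    intro i
    rw [orderOf_dvd_iff_pow_eq_one]
    have := pow_orderOf_eq_one (g : Fin s → K)
    exact congr_fun this i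
  have horder : orderOf (g : Fin s → K) = Monoid.exponent K := by
    refine Nat.dvd_antisymm ?_ ?_
    · have := Monoid.order_dvd_exponent (g : Fin s → K)
      rwa [hexp] at this
    · rw [Nat.dvd_iff_prime_pow_dvd_dvd]
      intro p k hp hpk
      rcases Nat.eq_zero_or_pos k with rfl | hk
      · simp
      have hpmem : p ∈ (Monoid.exponent K).primeFactors := by
        rw [Nat.mem_primeFactors]
        exact ⟨hp, dvd_trans (dvd_pow_self p hk.ne') hpk, hK0⟩
      have hkle : k ≤ (Monoid.exponent K).factorization p :=
        (Nat.Prime.pow_dvd_iff_le_factorization hp hK0).mp hpk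
      have : (p : ℕ) ^ k ∣ orderOf (g (e.symm ⟨p, hpmem⟩)) := by
        rw [hg]
        have : ((e (e.symm ⟨p, hpmem⟩) : ℕ)) = p := by
          rw [Equiv.apply_symm_apply]
        rw [this]
        exact pow_dvd_pow p hkle
      exact this.trans (hcomp _)
  have : Nonempty {x : Fin s → K // orderOf x = Monoid.exponent (Fin s → K)} :=
    ⟨⟨g, by rw [horder, hexp]⟩⟩
  unfold phi
  exact Nat.card_ne_zero.mpr ⟨this, Subtype.finite⟩
end
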